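/- For all n ≥ 1, the q-analog of Cassini's identity holds: f(n,x,s) f(n,x,qs) - f(n-1,x,qs) f(n+1,x,s) = (-1)^{n-1} q^{C(n,2)} s^{n-1}, where C(n,2) = n(n-1)/2. -/
import Mathlib


/-- Carlitz q-Fibonacci polynomials. -/
def qFib (q x s : ℝ) : ℕ → ℝ
  | 0 => 0
  | 1 => 1
  | (n+2) => x * qFib q x s (n+1) + q^n * s * qFib q x s n

theorem qCassini (q x s : ℝ) (n : ℕ) (hn : 1 ≤ n) :
    qFib q x s n * qFib q x (q*s) n - qFib q x (q*s) (n-1) * qFib q x s (n+1)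
      = (-1)^(n-1) * q^(n.choose 2) * s^(n-1) := by
  induction n, hn using Nat.le_induction with
  | base => simp [qFib]
  | succ n hn ih =>
    obtain ⟨m, rfl⟩ := Nat.exists_eq_add_of_le hn
    simp only [Nat.add_sub_cancel, show 1 + m = m + 1 from Nat.add_comm 1 m] at *
    have h1 : qFib q x (q*s) (m+2) = x * qFib q x (q*s) (m+1) + q^m * (q*s) * qFib q x (q*s) m := rfl
    have h2 : qFib q x s (m+3) = x * qFib q x s (m+2) + q^(m+1) * s * qFib q x s (m+1) := rfl
    have h3 : (m+2).choose 2 = (m+1) + (m+1).choose 2 := by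
      rw [Nat.choose_succ_succ (m+1) 1, Nat.choose_one_right]
    rw [show m+1+1 = m+2 from rfl, show m+2+1 = m+3 from rfl, h1, h2, h3, pow_add]
    linear_combination (-(q^(m+1)*s)) * ih
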